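/- Define V : ℝ³ → ℝ³ by V(x,y,z) = 2(x²+y²+1)^{−3/2}·(−y, x, 1) and p : ℝ³ → ℝ by p(x,y,z) = −(x²+y²+1)^{−2}. Then V is a steady incompressible Euler flow with pressure p: at every point of ℝ³ one has div V = 0 and (V·∇)V = −∇p. (Since V and p are independent of z, this yields a steady Euler flow on ℝ² × S¹ whose Bernoulli function is P(x,y,z) = (x²+y²+1)^{−2}.) -/

import Mathlib

/-!
Write `ρ = x² + y² + 1` and `w = (−y, x, 1)`, so that `V = g(ρ) w` with `g(t) = 2 t^{-3/2}`.
The field `w` is tangent to the level sets of `ρ` (`w · ∇ρ = −2xy + 2xy = 0`), hence every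
derivative falling on the profile `g(ρ)` drops out: `div V = g(ρ) div w = 0` and
`(V·∇)V = g(ρ)² (w·∇)w = −4 ρ^{-3} (x, y, 0)`, which is `−∇p` since `p = −ρ^{-2}`.
-/

open scoped BigOperators

/-- Partial derivative `∂ⱼ f` of a scalar function on `ℝ³`. -/
noncomputable def pd (j : Fin 3) (f : (Fin 3 → ℝ) → ℝ) (x : Fin 3 → ℝ) : ℝ :=
  fderiv ℝ f x (Pi.single j 1)

/-- The explicit vector field `V(x,y,z) = 2(x²+y²+1)^{-3/2}·(−y, x, 1)`. -/
noncomputable def Vex (x : Fin 3 → ℝ) : Fin 3 → ℝ :=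
  fun i => (2 * ((x 0) ^ 2 + (x 1) ^ 2 + 1) ^ (-(3/2) : ℝ)) * ![-(x 1), x 0, 1] i

/-- The explicit pressure `p(x,y,z) = −(x²+y²+1)^{-2}`. -/
noncomputable def pex (x : Fin 3 → ℝ) : ℝ :=
  -(((x 0) ^ 2 + (x 1) ^ 2 + 1) ^ 2)⁻¹

section PartialDerivatives

variable {f h : (Fin 3 → ℝ) → ℝ} {x : Fin 3 → ℝ}

lemma pd_mul (j : Fin 3) (hf : DifferentiableAt ℝ f x) (hh : DifferentiableAt ℝ h x) :
    pd j (fun y => f y * h y) x = pd j f x * h x + f x * pd j h x := by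
  simp only [pd, fderiv_fun_mul hf hh, add_apply, smul_apply, smul_eq_mul]
  ring

lemma pd_comp {g : ℝ → ℝ} (j : Fin 3) (hg : DifferentiableAt ℝ g (f x))
    (hf : DifferentiableAt ℝ f x) :
    pd j (fun y => g (f y)) x = deriv g (f x) * pd j f x := by
  rw [pd, fderiv_fun_comp x hg hf, ContinuousLinearMap.comp_apply, fderiv_eq_smul_deriv,
    smul_eq_mul, pd, mul_comm]

lemma fderiv_apply_coord (k : Fin 3) :
    fderiv ℝ (fun y : Fin 3 → ℝ => y k) x = ContinuousLinearMap.proj k :=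
  (hasFDerivAt_apply k x).fderiv

end PartialDerivatives

section ProfileTimesTangentField

variable {ρ : (Fin 3 → ℝ) → ℝ} {w : (Fin 3 → ℝ) → Fin 3 → ℝ} {g : ℝ → ℝ} {x : Fin 3 → ℝ}

lemma pd_comp_mul (i j : Fin 3) (hg : DifferentiableAt ℝ g (ρ x)) (hρ : DifferentiableAt ℝ ρ x)
    (hw : DifferentiableAt ℝ (fun y => w y i) x) :
    pd j (fun y => g (ρ y) * w y i) x
      = deriv g (ρ x) * pd j ρ x * w x i + g (ρ x) * pd j (fun y => w y i) x := by
  rw [pd_mul (f := fun y => g (ρ y)) j (hg.comp x hρ) hw, pd_comp j hg hρ]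

lemma sum_pd_comp_mul (hg : DifferentiableAt ℝ g (ρ x)) (hρ : DifferentiableAt ℝ ρ x)
    (hw : ∀ i, DifferentiableAt ℝ (fun y => w y i) x) (htan : ∑ j, w x j * pd j ρ x = 0) :
    ∑ i, pd i (fun y => g (ρ y) * w y i) x = g (ρ x) * ∑ i, pd i (fun y => w y i) x := by
  simp only [pd_comp_mul _ _ hg hρ (hw _), Finset.sum_add_distrib, ← Finset.mul_sum]
  have hprofile : ∑ i, deriv g (ρ x) * pd i ρ x * w x i
      = deriv g (ρ x) * ∑ j, w x j * pd j ρ x := by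
    rw [Finset.mul_sum]
    exact Finset.sum_congr rfl fun _ _ => by ring
  rw [hprofile, htan, mul_zero, zero_add]

lemma sum_mul_pd_comp_mul (hg : DifferentiableAt ℝ g (ρ x)) (hρ : DifferentiableAt ℝ ρ x)
    (hw : ∀ i, DifferentiableAt ℝ (fun y => w y i) x) (htan : ∑ j, w x j * pd j ρ x = 0)
    (i : Fin 3) :
    ∑ j, g (ρ x) * w x j * pd j (fun y => g (ρ y) * w y i) x
      = g (ρ x) ^ 2 * ∑ j, w x j * pd j (fun y => w y i) x := by
  simp only [pd_comp_mul _ _ hg hρ (hw _), mul_add, Finset.sum_add_distrib, Finset.mul_sum]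
  have hprofile : ∑ j, g (ρ x) * w x j * (deriv g (ρ x) * pd j ρ x * w x i)
      = g (ρ x) * deriv g (ρ x) * w x i * ∑ j, w x j * pd j ρ x := by
    rw [Finset.mul_sum]
    exact Finset.sum_congr rfl fun _ _ => by ring
  rw [hprofile, htan, mul_zero, zero_add]
  exact Finset.sum_congr rfl fun _ _ => by ring

end ProfileTimesTangentField

def oneAddRSq (x : Fin 3 → ℝ) : ℝ := x 0 ^ 2 + x 1 ^ 2 + 1

def swirl (x : Fin 3 → ℝ) : Fin 3 → ℝ := ![-(x 1), x 0, 1]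

section Swirl

variable (x : Fin 3 → ℝ)

lemma oneAddRSq_pos : 0 < oneAddRSq x := by
  unfold oneAddRSq
  positivity

lemma differentiableAt_oneAddRSq : DifferentiableAt ℝ oneAddRSq x := by
  unfold oneAddRSq
  fun_prop

lemma differentiableAt_swirl (i : Fin 3) : DifferentiableAt ℝ (fun y => swirl y i) x := by
  fin_cases i <;> simp [swirl] <;> fun_prop

lemma pd_oneAddRSq (j : Fin 3) : pd j oneAddRSq x = 2 * ![x 0, x 1, 0] j := by
  unfold oneAddRSq
  fin_cases j <;>
    simp [pd, fderiv_fun_add, fderiv_fun_pow, differentiableAt_apply, fderiv_apply_coord]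

lemma pd_swirl (i j : Fin 3) :
    pd j (fun y => swirl y i) x = ![![0, -1, 0], ![1, 0, 0], ![0, 0, 0]] i j := by
  fin_cases i <;> fin_cases j <;> simp [swirl, pd, fderiv_apply_coord]

lemma swirl_tangent_oneAddRSq : ∑ j, swirl x j * pd j oneAddRSq x = 0 := by
  simp [Fin.sum_univ_three, pd_oneAddRSq, swirl]
  ring

lemma sum_pd_swirl : ∑ i, pd i (fun y => swirl y i) x = 0 := by
  simp [Fin.sum_univ_three, pd_swirl]

lemma sum_mul_pd_swirl (i : Fin 3) :
    ∑ j, swirl x j * pd j (fun y => swirl y i) x = -![x 0, x 1, 0] i := by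
  simp only [Fin.sum_univ_three, pd_swirl]
  fin_cases i <;> simp [swirl]

end Swirl

lemma deriv_neg_inv_sq {t : ℝ} (ht : t ≠ 0) :
    deriv (fun t : ℝ => -(t ^ 2)⁻¹) t = 2 * (t ^ 3)⁻¹ := by
  rw [((hasDerivAt_pow 2 t).fun_inv (pow_ne_zero 2 ht)).fun_neg.deriv]
  field_simp
  ring

lemma pd_pex (x : Fin 3 → ℝ) (i : Fin 3) :
    pd i pex x = 4 * (oneAddRSq x ^ 3)⁻¹ * ![x 0, x 1, 0] i := by
  have hx := oneAddRSq_pos x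
  have hd : DifferentiableAt ℝ (fun t : ℝ => -(t ^ 2)⁻¹) (oneAddRSq x) := by
    fun_prop (disch := positivity)
  rw [show pex = fun y => -(oneAddRSq y ^ 2)⁻¹ from rfl,
    pd_comp i hd (differentiableAt_oneAddRSq x), deriv_neg_inv_sq hx.ne', pd_oneAddRSq]
  ring

lemma sq_two_mul_rpow_neg_three_halves {t : ℝ} (ht : 0 < t) :
    (2 * t ^ (-(3/2) : ℝ)) ^ 2 = 4 * (t ^ 3)⁻¹ := by
  rw [mul_pow, ← Real.rpow_natCast (t ^ (-(3/2) : ℝ)), ← Real.rpow_mul ht.le]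
  norm_num

/-- the field `V(x,y,z) = 2(x²+y²+1)^{-3/2}(−y,x,1)` is a steady incompressible
Euler flow on `ℝ³` with pressure `p(x,y,z) = −(x²+y²+1)^{-2}`: `div V = 0` and
`(V·∇)V = −∇p` at every point. -/
theorem stmt11 :
    (∀ x : Fin 3 → ℝ, (∑ i, pd i (fun y => Vex y i) x) = 0) ∧
    (∀ (x : Fin 3 → ℝ) (i : Fin 3),
      (∑ j, Vex x j * pd j (fun y => Vex y i) x) = - pd i pex x) := by
  have hVex : Vex = fun y i => (fun t : ℝ => 2 * t ^ (-(3/2) : ℝ)) (oneAddRSq y) * swirl y i :=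
    rfl
  have hg x : DifferentiableAt ℝ (fun t : ℝ => 2 * t ^ (-(3/2) : ℝ)) (oneAddRSq x) := by
    have := oneAddRSq_pos x
    fun_prop (disch := positivity)
  constructor
  · intro x
    rw [hVex, sum_pd_comp_mul (hg x) (differentiableAt_oneAddRSq x) (differentiableAt_swirl x)
      (swirl_tangent_oneAddRSq x), sum_pd_swirl, mul_zero]
  · intro x i
    rw [hVex, sum_mul_pd_comp_mul (hg x) (differentiableAt_oneAddRSq x)
      (differentiableAt_swirl x) (swirl_tangent_oneAddRSq x), sum_mul_pd_swirl, pd_pex,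
      sq_two_mul_rpow_neg_three_halves (oneAddRSq_pos x)]
    ring
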